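/- arXiv:2108.00452 — 2 statements merged into one kernel-verified Lean document; each statement's English description precedes it below -/
import Mathlib

section
/- Let Φ be a universal Horn sentence over a finite relational signature τ. Then Models(Φ) has the strong amalgamation property if and only if Models(Φ) has the one-point strong amalgamation property. -/
open FirstOrder Language CategoryTheory

namespace AmalgamationHard

/-- An atomic formula `R(args)` over a relational language `L` with variables from `V`
(equality atoms are not permitted). -/
structure RelAtom (L : FirstOrder.Language.{0, 0}) (V : Type) where
  n : ℕ
  R : L.Relations n
  args : Fin n → V

variable {L : FirstOrder.Language.{0, 0}}

/-- Renaming the variables of an atom. -/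
def RelAtom.map {V W : Type} (f : V → W) (a : RelAtom L V) : RelAtom L W :=
  ⟨a.n, a.R, f ∘ a.args⟩

/-- Realization of an atomic formula in a structure under an assignment of the variables. -/
def RelAtom.Realize {V M : Type} [L.Structure M] (a : RelAtom L V) (v : V → M) : Prop :=
  Structure.RelMap a.R (v ∘ a.args)

/-- A Horn clause: a finite conjunction of atoms (the premise) implying either an atom or
`⊥` (conclusion `none` codes `⊥`). -/
structure HornClause (L : FirstOrder.Language.{0, 0}) (V : Type) where
  prem : List (RelAtom L V)
  concl : Option (RelAtom L V)

/-- Realization of a Horn clause under an assignment. -/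
def HornClause.Realize {V M : Type} [L.Structure M] (c : HornClause L V) (v : V → M) : Prop :=
  (∀ a ∈ c.prem, a.Realize v) → c.concl.elim False (fun a => a.Realize v)

/-- A structure satisfies a universal Horn sentence (coded as a finite list of Horn clauses,
with all variables universally quantified) if every clause holds under every assignment. -/
def Satisfies (Φ : List (HornClause L ℕ)) (M : Type) [L.Structure M] : Prop :=
  ∀ c ∈ Φ, ∀ v : ℕ → M, c.Realize v

/-- `Models Φ`: the class of all finite models of the universal Horn sentence `Φ`. -/
def Models (Φ : List (HornClause L ℕ)) : Set (Bundled L.Structure) :=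
  { M | Finite M ∧ Satisfies Φ M }

/-- The amalgamation property for a class of structures. -/
def HasAP (K : Set (Bundled.{0} L.Structure)) : Prop :=
  ∀ (A B₁ B₂ : Bundled.{0} L.Structure) (e₁ : A ↪[L] B₁) (e₂ : A ↪[L] B₂),
    A ∈ K → B₁ ∈ K → B₂ ∈ K →
      ∃ (C : Bundled.{0} L.Structure) (f₁ : B₁ ↪[L] C) (f₂ : B₂ ↪[L] C),
        C ∈ K ∧ f₁.comp e₁ = f₂.comp e₂

/-- The strong amalgamation property for a class of structures. -/
def HasStrongAP (K : Set (Bundled.{0} L.Structure)) : Prop :=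
  ∀ (A B₁ B₂ : Bundled.{0} L.Structure) (e₁ : A ↪[L] B₁) (e₂ : A ↪[L] B₂),
    A ∈ K → B₁ ∈ K → B₂ ∈ K →
      ∃ (C : Bundled.{0} L.Structure) (f₁ : B₁ ↪[L] C) (f₂ : B₂ ↪[L] C),
        C ∈ K ∧ f₁.comp e₁ = f₂.comp e₂ ∧
        Set.range f₁ ∩ Set.range f₂ = Set.range (f₁.comp e₁) ∧
        Set.range (f₁.comp e₁) = Set.range (f₂.comp e₂)

/-- The one-point amalgamation property: the amalgamation property restricted to triples
`(A, B₁, B₂)` with `|B₁| = |B₂| = |A| + 1`. -/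
def HasOnePointAP (K : Set (Bundled.{0} L.Structure)) : Prop :=
  ∀ (A B₁ B₂ : Bundled.{0} L.Structure) (e₁ : A ↪[L] B₁) (e₂ : A ↪[L] B₂),
    A ∈ K → B₁ ∈ K → B₂ ∈ K →
    Nat.card B₁ = Nat.card A + 1 → Nat.card B₂ = Nat.card A + 1 →
      ∃ (C : Bundled.{0} L.Structure) (f₁ : B₁ ↪[L] C) (f₂ : B₂ ↪[L] C),
        C ∈ K ∧ f₁.comp e₁ = f₂.comp e₂

/-- The one-point strong amalgamation property: the strong amalgamation property restricted
to triples `(A, B₁, B₂)` with `|B₁| = |B₂| = |A| + 1`. -/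
def HasOnePointStrongAP (K : Set (Bundled.{0} L.Structure)) : Prop :=
  ∀ (A B₁ B₂ : Bundled.{0} L.Structure) (e₁ : A ↪[L] B₁) (e₂ : A ↪[L] B₂),
    A ∈ K → B₁ ∈ K → B₂ ∈ K →
    Nat.card B₁ = Nat.card A + 1 → Nat.card B₂ = Nat.card A + 1 →
      ∃ (C : Bundled.{0} L.Structure) (f₁ : B₁ ↪[L] C) (f₂ : B₂ ↪[L] C),
        C ∈ K ∧ f₁.comp e₁ = f₂.comp e₂ ∧
        Set.range f₁ ∩ Set.range f₂ = Set.range (f₁.comp e₁) ∧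
        Set.range (f₁.comp e₁) = Set.range (f₂.comp e₂)

-- auxiliary: satisfaction transfers down embeddings
lemma satisfies_of_embedding {M N : Type} [L.Structure M] [L.Structure N]
    (f : M ↪[L] N) {Φ : List (HornClause L ℕ)} (h : Satisfies Φ N) : Satisfies Φ M := by
  intro c hc v hp
  have hat : ∀ a : RelAtom L ℕ, a.Realize (f ∘ v) ↔ a.Realize v := by
    intro a
    show Structure.RelMap a.R ((f ∘ v) ∘ a.args) ↔ Structure.RelMap a.R (v ∘ a.args)
    rw [Function.comp_assoc]
    exact f.map_rel _ _
  have h2 := h c hc (f ∘ v) (fun a ha => (hat a).mpr (hp a ha))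
  cases hcc : c.concl with
  | none => rw [hcc] at h2; exact h2
  | some a => rw [hcc] at h2; exact (hat a).mp h2

def setSub [L.IsRelational] {M : Type} [L.Structure M] (s : Set M) : L.Substructure M :=
  ⟨s, fun {n} f => isEmptyElim f⟩





def SAmal (K : Set (Bundled.{0} L.Structure)) (A B₁ B₂ : Bundled.{0} L.Structure)
    (e₁ : A ↪[L] B₁) (e₂ : A ↪[L] B₂) : Prop :=
  ∃ (C : Bundled.{0} L.Structure) (f₁ : B₁ ↪[L] C) (f₂ : B₂ ↪[L] C),
    C ∈ K ∧ f₁.comp e₁ = f₂.comp e₂ ∧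
    Set.range f₁ ∩ Set.range f₂ = Set.range (f₁.comp e₁) ∧
    Set.range (f₁.comp e₁) = Set.range (f₂.comp e₂)

lemma SAmal.symm {K : Set (Bundled.{0} L.Structure)} {A B₁ B₂ : Bundled.{0} L.Structure}
    {e₁ : A ↪[L] B₁} {e₂ : A ↪[L] B₂}
    (h : SAmal K A B₁ B₂ e₁ e₂) : SAmal K A B₂ B₁ e₂ e₁ := by
  obtain ⟨C, f₁, f₂, hC, hc, hi, hr⟩ := h
  exact ⟨C, f₂, f₁, hC, hc.symm, by rw [Set.inter_comm, hi, hr], hr.symm⟩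

lemma SAmal.shrink [L.IsRelational] {Φ : List (HornClause L ℕ)}
    {A B₁ B₂ : Bundled.{0} L.Structure}
    {e₁ : A ↪[L] B₁} {e₂ : A ↪[L] B₂} (hA : A ∈ Models Φ)
    (h : SAmal (Models Φ) A B₁ B₂ e₁ e₂) :
    ∃ (C : Bundled.{0} L.Structure) (f₁ : B₁ ↪[L] C) (f₂ : B₂ ↪[L] C),
      C ∈ Models Φ ∧ f₁.comp e₁ = f₂.comp e₂ ∧
      Set.range f₁ ∩ Set.range f₂ = Set.range (f₁.comp e₁) ∧
      Set.range (f₁.comp e₁) = Set.range (f₂.comp e₂) ∧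
      Nat.card C + Nat.card A = Nat.card B₁ + Nat.card B₂ := by
  obtain ⟨C, f₁, f₂, hC, hc, hi, hr⟩ := h
  have : Finite C := hC.1
  have : Finite A := hA.1
  set s : Set C := Set.range f₁ ∪ Set.range f₂ with hs
  set S : L.Substructure C := setSub s with hS
  have hm1 : ∀ b : B₁, f₁ b ∈ S := fun b => Set.mem_union_left _ ⟨b, rfl⟩
  have hm2 : ∀ b : B₂, f₂ b ∈ S := fun b => Set.mem_union_right _ ⟨b, rfl⟩
  set f₁' := f₁.codRestrict S hm1 with hf₁'
  set f₂' := f₂.codRestrict S hm2 with hf₂'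
  have hv1 : ∀ (b : B₁) (x : S), f₁' b = x ↔ f₁ b = ↑x := by
    intro b x
    rw [Subtype.ext_iff, hf₁', Embedding.codRestrict_apply]
  have hv2 : ∀ (b : B₂) (x : S), f₂' b = x ↔ f₂ b = ↑x := by
    intro b x
    rw [Subtype.ext_iff, hf₂', Embedding.codRestrict_apply]
  have hcomm : f₁'.comp e₁ = f₂'.comp e₂ := by
    apply Embedding.ext
    intro a
    rw [Embedding.comp_apply, Embedding.comp_apply, hv1]
    show f₁ (e₁ a) = f₂ (e₂ a)
    exact DFunLike.congr_fun hc a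
  have hinter : Set.range ⇑f₁' ∩ Set.range ⇑f₂' = Set.range ⇑(f₁'.comp e₁) := by
    ext x
    simp only [Set.mem_inter_iff, Set.mem_range, Embedding.comp_apply, hv1, hv2]
    have := Set.ext_iff.1 hi (↑x)
    simp only [Set.mem_inter_iff, Set.mem_range, Embedding.comp_apply] at this
    exact this
  have hcard : Nat.card ↥S = s.ncard := Nat.card_coe_set_eq s
  have hu := Set.ncard_union_add_ncard_inter (Set.range ⇑f₁) (Set.range ⇑f₂)
    (Set.toFinite _) (Set.toFinite _)
  have hr1 : (Set.range ⇑f₁).ncard = Nat.card B₁ := by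
    rw [← Nat.card_coe_set_eq, Nat.card_range_of_injective f₁.injective]
  have hr2 : (Set.range ⇑f₂).ncard = Nat.card B₂ := by
    rw [← Nat.card_coe_set_eq, Nat.card_range_of_injective f₂.injective]
  have hri : (Set.range ⇑f₁ ∩ Set.range ⇑f₂).ncard = Nat.card A := by
    rw [hi, ← Nat.card_coe_set_eq, Nat.card_range_of_injective (f₁.comp e₁).injective]
  refine ⟨⟨↥S, inferInstance⟩, f₁', f₂',
    ⟨by rw [hS]; exact Finite.Set.finite_union _ _, satisfies_of_embedding S.subtype hC.2⟩,
    hcomm, hinter, by rw [hcomm], ?_⟩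
  · rw [hr1, hr2, hri, ← hs] at hu
    rw [hcard]
    omega





lemma amal_of_card_eq {Φ : List (HornClause L ℕ)} {A B₁ B₂ : Bundled.{0} L.Structure}
    (e₁ : A ↪[L] B₁) (e₂ : A ↪[L] B₂) (hA : A ∈ Models Φ) (hB₁ : B₁ ∈ Models Φ)
    (hB₂ : B₂ ∈ Models Φ) (hcard : Nat.card B₁ = Nat.card A) :
    SAmal (Models Φ) A B₁ B₂ e₁ e₂ := by
  have : Finite B₁ := hB₁.1
  have hbij : Function.Bijective ⇑e₁ :=
    (Nat.bijective_iff_injective_and_card ⇑e₁).mpr ⟨e₁.injective, hcard.symm⟩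
  let E : A ≃[L] B₁ := ⟨Equiv.ofBijective ⇑e₁ hbij, e₁.map_fun', e₁.map_rel'⟩
  have hEa : ∀ a : A, E.symm (e₁ a) = a := fun a => E.symm_apply_apply a
  have hEb : ∀ b : B₁, e₁ (E.symm b) = b := fun b => E.apply_symm_apply b
  set f₁ : B₁ ↪[L] B₂ := e₂.comp E.symm.toEmbedding with hf₁
  set f₂ : B₂ ↪[L] B₂ := Embedding.refl L B₂ with hf₂
  have hap1 : ∀ b : B₁, f₁ b = e₂ (E.symm b) := fun b => rfl
  have hap2 : ∀ b : B₂, f₂ b = b := fun b => rfl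
  have hcomm : f₁.comp e₁ = f₂.comp e₂ := by
    apply Embedding.ext
    intro a
    show f₁ (e₁ a) = f₂ (e₂ a)
    rw [hap1, hap2, hEa]
  refine ⟨B₂, f₁, f₂, hB₂, hcomm, ?_, by rw [hcomm]⟩
  ext x
  constructor
  · rintro ⟨⟨b, hb⟩, -⟩
    refine ⟨E.symm b, ?_⟩
    show f₁ (e₁ (E.symm b)) = x
    rw [hEb]; exact hb
  · rintro ⟨a, rfl⟩
    exact ⟨⟨e₁ a, rfl⟩, ⟨(f₁.comp e₁) a, rfl⟩⟩

lemma step [L.IsRelational] {Φ : List (HornClause L ℕ)} {N : ℕ}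
    (IH : ∀ (A B₁ B₂ : Bundled.{0} L.Structure) (e₁ : A ↪[L] B₁) (e₂ : A ↪[L] B₂),
      A ∈ Models Φ → B₁ ∈ Models Φ → B₂ ∈ Models Φ →
      (Nat.card B₁ - Nat.card A) + (Nat.card B₂ - Nat.card A) ≤ N →
      SAmal (Models Φ) A B₁ B₂ e₁ e₂)
    {A B₁ B₂ : Bundled.{0} L.Structure} (e₁ : A ↪[L] B₁) (e₂ : A ↪[L] B₂)
    (hA : A ∈ Models Φ) (hB₁ : B₁ ∈ Models Φ) (hB₂ : B₂ ∈ Models Φ)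
    (h2 : Nat.card A + 2 ≤ Nat.card B₁)
    (hN : (Nat.card B₁ - Nat.card A) + (Nat.card B₂ - Nat.card A) ≤ N + 1) :
    SAmal (Models Φ) A B₁ B₂ e₁ e₂ := by
  have : Finite A := hA.1
  have : Finite B₁ := hB₁.1
  have : Finite B₂ := hB₂.1
  have haleB₂ : Nat.card A ≤ Nat.card B₂ := Nat.card_le_card_of_injective _ e₂.injective
  have hnotsurj : ¬ Function.Surjective ⇑e₁ := by
    intro hs
    have := Nat.card_le_card_of_surjective _ hs
    omega
  rw [Function.Surjective] at hnotsurj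
  push_neg at hnotsurj
  obtain ⟨b, hb⟩ := hnotsurj
  have hbmem : b ∉ Set.range ⇑e₁ := by
    rintro ⟨a, ha⟩; exact hb a ha
  set s₁ : Set B₁ := insert b (Set.range ⇑e₁) with hs₁
  set Asub : L.Substructure B₁ := setSub s₁ with hAsub
  set A' : Bundled.{0} L.Structure := ⟨↥Asub, inferInstance⟩ with hA'def
  have hfinA' : Finite ↥Asub := Subtype.finite
  have hA' : A' ∈ Models Φ := ⟨hfinA', satisfies_of_embedding Asub.subtype hB₁.2⟩
  have hcardA' : Nat.card A' = Nat.card A + 1 := by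
    have h1 : Nat.card A' = s₁.ncard := Nat.card_coe_set_eq s₁
    rw [h1, hs₁, Set.ncard_insert_of_notMem hbmem (Set.toFinite _),
      ← Nat.card_coe_set_eq, Nat.card_range_of_injective e₁.injective]
  set e₁' : A ↪[L] A' := e₁.codRestrict Asub (fun a => Set.mem_insert_of_mem _ ⟨a, rfl⟩)
    with he₁'
  set i : A' ↪[L] B₁ := Asub.subtype with hi
  obtain ⟨D, g₁, g₂, hD, hcomm1, hint1, hrr1, hcard1⟩ :=
    (IH A A' B₂ e₁' e₂ hA hA' hB₂ (by omega)).shrink hA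
  have hcardD : Nat.card D = Nat.card B₂ + 1 := by omega
  obtain ⟨C, h₁, h₂, hC, hcomm2, hint2, hrr2⟩ :=
    IH A' B₁ D i g₁ hA' hB₁ hD (by omega)
  have hpt : ∀ a : A, h₁ (e₁ a) = h₂ (g₂ (e₂ a)) := by
    intro a
    have t2 : h₁ (e₁ a) = h₂ (g₁ (e₁' a)) := DFunLike.congr_fun hcomm2 (e₁' a)
    have t3 : g₁ (e₁' a) = g₂ (e₂ a) := DFunLike.congr_fun hcomm1 a
    rw [t2, t3]
  have hcommF : h₁.comp e₁ = (h₂.comp g₂).comp e₂ := by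
    apply Embedding.ext
    intro a
    exact hpt a
  refine ⟨C, h₁, h₂.comp g₂, hC, hcommF, ?_, by rw [hcommF]⟩
  ext x
  constructor
  · rintro ⟨⟨b₁, hb₁⟩, ⟨b₂, hb₂⟩⟩
    have hx12 : x ∈ Set.range ⇑h₁ ∩ Set.range ⇑h₂ := ⟨⟨b₁, hb₁⟩, ⟨g₂ b₂, hb₂⟩⟩
    rw [hint2] at hx12
    obtain ⟨a', ha'⟩ := hx12
    have hg : g₂ b₂ = g₁ a' := by
      apply h₂.injective
      have t : h₁ (i a') = h₂ (g₁ a') := DFunLike.congr_fun hcomm2 a'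
      have ha'' : h₁ (i a') = x := ha'
      rw [← t, ha'']
      exact hb₂
    have hmem : g₁ a' ∈ Set.range ⇑g₁ ∩ Set.range ⇑g₂ := ⟨⟨a', rfl⟩, ⟨b₂, hg⟩⟩
    rw [hint1] at hmem
    obtain ⟨a, ha⟩ := hmem
    have hea : e₁' a = a' := g₁.injective ha
    refine ⟨a, ?_⟩
    show h₁ (i (e₁' a)) = x
    rw [hea]
    exact ha'
  · rintro ⟨a, rfl⟩
    exact ⟨⟨e₁ a, rfl⟩, ⟨e₂ a, (hpt a).symm⟩⟩

lemma main [L.IsRelational] {Φ : List (HornClause L ℕ)} (hop : HasOnePointStrongAP (Models Φ)) :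
    ∀ (N : ℕ) (A B₁ B₂ : Bundled.{0} L.Structure) (e₁ : A ↪[L] B₁) (e₂ : A ↪[L] B₂),
      A ∈ Models Φ → B₁ ∈ Models Φ → B₂ ∈ Models Φ →
      (Nat.card B₁ - Nat.card A) + (Nat.card B₂ - Nat.card A) ≤ N →
      SAmal (Models Φ) A B₁ B₂ e₁ e₂ := by
  intro N
  induction N with
  | zero =>
    intro A B₁ B₂ e₁ e₂ hA hB₁ hB₂ hN
    have : Finite B₁ := hB₁.1
    have := Nat.card_le_card_of_injective _ e₁.injective
    exact amal_of_card_eq e₁ e₂ hA hB₁ hB₂ (by omega)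
  | succ N IH =>
    intro A B₁ B₂ e₁ e₂ hA hB₁ hB₂ hN
    have : Finite B₁ := hB₁.1
    have : Finite B₂ := hB₂.1
    have l1 := Nat.card_le_card_of_injective _ e₁.injective
    have l2 := Nat.card_le_card_of_injective _ e₂.injective
    by_cases hc1 : Nat.card B₁ = Nat.card A
    · exact amal_of_card_eq e₁ e₂ hA hB₁ hB₂ hc1
    · by_cases hc2 : Nat.card B₂ = Nat.card A
      · exact (amal_of_card_eq e₂ e₁ hA hB₂ hB₁ hc2).symm
      · by_cases hc3 : Nat.card B₁ = Nat.card A + 1 ∧ Nat.card B₂ = Nat.card A + 1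
        · exact hop A B₁ B₂ e₁ e₂ hA hB₁ hB₂ hc3.1 hc3.2
        · rcases (by omega : Nat.card A + 2 ≤ Nat.card B₁ ∨ Nat.card A + 2 ≤ Nat.card B₂)
            with h | h
          · exact step IH e₁ e₂ hA hB₁ hB₂ h hN
          · exact (step IH e₂ e₁ hA hB₂ hB₁ h (by omega)).symm



theorem strongAP_iff_onePointStrongAP [L.IsRelational] [Finite L.Symbols]
    (Φ : List (HornClause L ℕ)) :
    HasStrongAP (Models Φ) ↔ HasOnePointStrongAP (Models Φ) := by
  constructor
  · intro h A B₁ B₂ e₁ e₂ hA hB₁ hB₂ _ _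
    exact h A B₁ B₂ e₁ e₂ hA hB₁ hB₂
  · intro hop A B₁ B₂ e₁ e₂ hA hB₁ hB₂
    exact main hop _ A B₁ B₂ e₁ e₂ hA hB₁ hB₂ le_rfl

end AmalgamationHard
end

section
/- Let Φ be a universal Horn sentence over a finite relational signature τ. Then Models(Φ) has the amalgamation property if and only if the following holds: for all conjunctions of atomic τ-formulas φ(x̄), φ₁(x̄,y₁), φ₂(x̄,y₂) such that φ(x̄) ∧ φ_i(x̄,y_i) ⊑_Φ φ(x̄) for i ∈ {1,2}, one has φ(x̄) ∧ φ₁(x̄,y₁) ∧ φ₂(x̄,y₂) ⊑_Φ φ(x̄) ∧ φ₁(x̄,y₁). -/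
open FirstOrder Language CategoryTheory

namespace AmalgamationHard

variable {L : FirstOrder.Language.{0, 0}}

/-- `Entails Φ prem concl` : the universal Horn sentence `Φ` semantically entails the
universally quantified Horn clause with premise `prem` and conclusion `concl`
(`none` codes `⊥`), i.e. every structure satisfying `Φ` satisfies the clause. -/
def Entails (Φ : List (HornClause L ℕ)) {V : Type}
    (prem : List (RelAtom L V)) (concl : Option (RelAtom L V)) : Prop :=
  ∀ (M : Type) [L.Structure M], Satisfies Φ M → ∀ v : V → M,
    (∀ a ∈ prem, a.Realize v) → concl.elim False (fun a => a.Realize v)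

/-- `Subsumes Φ ψ φ` : the conjunction `φ(x̄)` of atoms (with variables from `X`) subsumes
the conjunction `ψ(x̄, ȳ)` of atoms (with variables from `X ⊕ Y`) with respect to `Φ`,
written `ψ(x̄,ȳ) ⊑_Φ φ(x̄)`: for every `χ` that is `⊥` or an atom with variables among `x̄`,
if `Φ ⊨ ∀x̄ȳ (ψ ⇒ χ)` then `Φ ⊨ ∀x̄ (φ ⇒ χ)`. -/
def Subsumes (Φ : List (HornClause L ℕ)) {X Y : Type}
    (ψ : List (RelAtom L (X ⊕ Y))) (φ : List (RelAtom L X)) : Prop :=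
  ∀ χ : Option (RelAtom L X),
    Entails Φ ψ (χ.map (RelAtom.map Sum.inl)) → Entails Φ φ χ

/-- The subsumption condition of Lemma 1(3): for all conjunctions of atoms `φ(x̄)`,
`φ₁(x̄,y₁)`, `φ₂(x̄,y₂)` with `φ ∧ φᵢ ⊑_Φ φ` for `i ∈ {1,2}`, one has
`φ ∧ φ₁ ∧ φ₂ ⊑_Φ φ ∧ φ₁`. Here `y₁` and `y₂` are single fresh variables, coded by
`Sum.inr ()`. -/
def SubsumptionCondition (Φ : List (HornClause L ℕ)) : Prop :=
  ∀ (m : ℕ) (φ : List (RelAtom L (Fin m))) (φ₁ φ₂ : List (RelAtom L (Fin m ⊕ Unit))),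
    Subsumes Φ (φ.map (RelAtom.map Sum.inl) ++ φ₁) φ →
    Subsumes Φ (φ.map (RelAtom.map Sum.inl) ++ φ₂) φ →
    Subsumes Φ (Y := Unit)
      (φ.map (RelAtom.map (Sum.inl ∘ Sum.inl)) ++ φ₁.map (RelAtom.map Sum.inl)
        ++ φ₂.map (RelAtom.map (Sum.map Sum.inl id)))
      (φ.map (RelAtom.map Sum.inl) ++ φ₁)

/-! ### Auxiliary lemmas -/

section Aux

variable {Φ : List (HornClause L ℕ)}

lemma RelAtom.map_id {V : Type} (a : RelAtom L V) : a.map (id : V → V) = a := rfl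

lemma RelAtom.map_map {U V W : Type} (f : U → V) (g : V → W) (a : RelAtom L U) :
    (a.map f).map g = a.map (g ∘ f) := rfl

lemma RelAtom.realize_map {V W M : Type} [L.Structure M] (f : V → W) (a : RelAtom L V)
    (v : W → M) : (a.map f).Realize v ↔ a.Realize (v ∘ f) := Iff.rfl

lemma RelAtom.realize_emb {V M N : Type} [L.Structure M] [L.Structure N]
    (f : M ↪[L] N) (a : RelAtom L V) (v : V → M) :
    a.Realize (⇑f ∘ v) ↔ a.Realize v := f.map_rel' a.R (v ∘ a.args)

lemma entails_of_mem {V : Type} {ψ : List (RelAtom L V)} {a : RelAtom L V} (h : a ∈ ψ) :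
    Entails Φ ψ (some a) := fun _M _ _ v hv => hv a h

lemma entails_mono {V : Type} {ψ ψ' : List (RelAtom L V)} (h : ∀ a ∈ ψ, a ∈ ψ')
    {χ : Option (RelAtom L V)} (he : Entails Φ ψ χ) : Entails Φ ψ' χ :=
  fun M _ hM v hv => he M hM v (fun a ha => hv a (h a ha))

lemma entails_map {V W : Type} (f : V → W) {ψ : List (RelAtom L V)}
    {χ : Option (RelAtom L V)} (he : Entails Φ ψ χ) :
    Entails Φ (ψ.map (RelAtom.map f)) (χ.map (RelAtom.map f)) := by
  intro M _ hM v hv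
  have := he M hM (v ∘ f) (fun a ha => hv (a.map f) (List.mem_map_of_mem ha))
  cases χ with
  | none => exact this
  | some a => exact this

lemma entails_false_elim {V : Type} {ψ : List (RelAtom L V)} (h : Entails Φ ψ none)
    (χ : Option (RelAtom L V)) : Entails Φ ψ χ :=
  fun M _ hM v hv => absurd (h M hM v hv) not_false

end Aux

section MoreAux

variable {Φ : List (HornClause L ℕ)}

lemma RelAtom.realize_ext {V M : Type} [L.Structure M] (a : RelAtom L V) {v w : V → M}
    (h : ∀ x, v x = w x) : a.Realize v ↔ a.Realize w := by
  rw [show v = w from funext h]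

lemma entails_extend {X W : Type} {φ : List (RelAtom L X)} {ext : List (RelAtom L W)}
    (f : X → W) (hsub : ∀ a ∈ φ, a.map f ∈ ext) {χ : Option (RelAtom L X)}
    (h : Entails Φ φ χ) : Entails Φ ext (χ.map (RelAtom.map f)) := by
  intro M _ hM v hv
  have := h M hM (v ∘ f) (fun a ha => hv _ (hsub a ha))
  cases χ with
  | none => exact this
  | some a => exact this

end MoreAux
/-! ### The canonical model of a conjunction of atoms -/

section Canonical

variable [L.IsRelational] (Φ : List (HornClause L ℕ))

/-- The canonical (free) model of the conjunction of atoms `ψ` relative to `Φ`: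
the carrier is the variable set, and an atom holds iff it is entailed by `ψ` under `Φ`. -/
def canStructure {V : Type} (ψ : List (RelAtom L V)) : L.Structure V where
  funMap := fun f => isEmptyElim f
  RelMap := fun {n} R t => Entails Φ ψ (some ⟨n, R, t⟩)

/-- Carrier type synonym for the canonical model. -/
def CanCarrier (_Φ : List (HornClause L ℕ)) {V : Type} (_ψ : List (RelAtom L V)) : Type := V

instance canInst {V : Type} (ψ : List (RelAtom L V)) : L.Structure (CanCarrier Φ ψ) :=
  canStructure Φ ψ

/-- The canonical model, bundled. -/
def canM {V : Type} (ψ : List (RelAtom L V)) : Bundled L.Structure :=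
  ⟨CanCarrier Φ ψ, canInst Φ ψ⟩

variable {V : Type} (ψ : List (RelAtom L V))

/-- The identity valuation into the canonical model. -/
def canId : V → CanCarrier Φ ψ := id

lemma canM_realize_iff {W : Type} (a : RelAtom L W) (v : W → canM Φ ψ) :
    a.Realize v ↔ Entails Φ ψ (some (a.map v)) := Iff.rfl

lemma canM_realize_self : ∀ a ∈ ψ, a.Realize (canId Φ ψ) := by
  intro a ha
  exact (canM_realize_iff Φ ψ a (canId Φ ψ)).2
    (by change Entails Φ ψ (some a); exact entails_of_mem ha)

lemma canM_satisfies (hbot : ¬ Entails Φ ψ none) : Satisfies Φ (canM Φ ψ) := by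
  intro c hc v hp
  have hp' : ∀ a ∈ c.prem, Entails Φ ψ (some (a.map v)) :=
    fun a ha => (canM_realize_iff Φ ψ a v).1 (hp a ha)
  have key : ∀ (M : Type) [L.Structure M], Satisfies Φ M → ∀ w : V → M,
      (∀ a ∈ ψ, a.Realize w) →
      (c.concl.map (RelAtom.map v)).elim False (fun a => a.Realize w) := by
    intro M _ hM w hw
    have hc' := hM c hc (w ∘ v)
    have := hc' (fun a ha => hp' a ha M hM w hw)
    cases hcc : c.concl with
    | none => rw [hcc] at this; exact this
    | some a => rw [hcc] at this; exact this
  cases hcc : c.concl with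
  | none =>
    exact absurd (by intro M _ hM w hw; have := key M hM w hw; rw [hcc] at this; exact this) hbot
  | some a =>
    show (a.Realize v : Prop)
    refine (canM_realize_iff Φ ψ a v).2 ?_
    intro M _ hM w hw
    have := key M hM w hw
    rw [hcc] at this
    exact this

lemma canM_mem_models [Finite V] (hbot : ¬ Entails Φ ψ none) : canM Φ ψ ∈ Models Φ :=
  ⟨‹Finite V›, canM_satisfies Φ ψ hbot⟩

/-- Any valuation realizing `ψ` in a model of `Φ` is a homomorphism out of the
canonical model in the sense that it preserves realized atoms. -/
lemma canM_realize_out {M : Type} [L.Structure M] (hM : Satisfies Φ M) {w : V → M}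
    (hw : ∀ a ∈ ψ, a.Realize w) {W : Type} (a : RelAtom L W) (v : W → canM Φ ψ)
    (h : a.Realize v) : a.Realize (w ∘ v) := by
  have := (canM_realize_iff Φ ψ a v).1 h
  exact this M hM w hw

/-- The canonical embedding between canonical models induced by subsumption. -/
def canEmb {X W : Type} (φ : List (RelAtom L X)) (ψ : List (RelAtom L W)) (f : X → W)
    (hf : Function.Injective f) (hmem : ∀ a ∈ φ, a.map f ∈ ψ)
    (hs : ∀ a : RelAtom L X, Entails Φ ψ (some (a.map f)) → Entails Φ φ (some a)) :
    canM Φ φ ↪[L] canM Φ ψ where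
  toFun := f
  inj' := hf
  map_fun' := fun {n} F => isEmptyElim F
  map_rel' := by
    intro n r x
    show Entails Φ ψ (some ⟨n, r, f ∘ x⟩) ↔ Entails Φ φ (some ⟨n, r, x⟩)
    constructor
    · exact fun h => hs ⟨n, r, x⟩ h
    · exact fun h => entails_extend (χ := some ⟨n, r, x⟩) f hmem h

end Canonical
section Forward

variable [L.IsRelational] {Φ : List (HornClause L ℕ)}

lemma forward_dir (hap : HasAP (Models Φ)) : SubsumptionCondition Φ := by
  intro m φ φ₁ φ₂ hs₁ hs₂ χ hχ
  set ψ₁ := φ.map (RelAtom.map Sum.inl) ++ φ₁ with hψ₁def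
  set ψ₂ := φ.map (RelAtom.map Sum.inl) ++ φ₂ with hψ₂def
  have hmem₁ : ∀ a ∈ φ, a.map Sum.inl ∈ ψ₁ :=
    fun a ha => List.mem_append_left _ (List.mem_map_of_mem ha)
  have hmem₂ : ∀ a ∈ φ, a.map Sum.inl ∈ ψ₂ :=
    fun a ha => List.mem_append_left _ (List.mem_map_of_mem ha)
  by_cases hb1 : Entails Φ ψ₁ none
  · exact entails_false_elim hb1 χ
  by_cases hb2 : Entails Φ ψ₂ none
  · exact entails_false_elim (entails_extend (χ := none) Sum.inl hmem₁ (hs₂ none hb2)) χ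
  have hbφ : ¬ Entails Φ φ none :=
    fun h => hb1 (entails_extend (χ := none) Sum.inl hmem₁ h)
  have hA := canM_mem_models Φ φ hbφ
  have hB₁ := canM_mem_models Φ ψ₁ hb1
  have hB₂ := canM_mem_models Φ ψ₂ hb2
  let e₁ := canEmb Φ φ ψ₁ Sum.inl Sum.inl_injective hmem₁ (fun a h => hs₁ (some a) h)
  let e₂ := canEmb Φ φ ψ₂ Sum.inl Sum.inl_injective hmem₂ (fun a h => hs₂ (some a) h)
  obtain ⟨C, f₁, f₂, hC, hcomm⟩ := hap (canM Φ φ) (canM Φ ψ₁) (canM Φ ψ₂) e₁ e₂ hA hB₁ hB₂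
  let u : (Fin m ⊕ Unit) ⊕ Unit → C := Sum.elim ⇑f₁ (fun _ => f₂ (Sum.inr ()))
  have hf12 : ∀ j : Fin m, f₁ (Sum.inl j) = f₂ (Sum.inl j) :=
    fun j => DFunLike.congr_fun hcomm j
  have hreal : ∀ a ∈ (φ.map (RelAtom.map (Sum.inl ∘ Sum.inl)) ++ φ₁.map (RelAtom.map Sum.inl)
        ++ φ₂.map (RelAtom.map (Sum.map Sum.inl id))), a.Realize u := by
    intro a ha
    rcases List.mem_append.1 ha with ha | ha
    · rcases List.mem_append.1 ha with ha | ha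
      · obtain ⟨a₀, ha₀, rfl⟩ := List.mem_map.1 ha
        rw [RelAtom.realize_map]
        exact (RelAtom.realize_emb (f₁.comp e₁) a₀ (canId Φ φ)).2 (canM_realize_self Φ φ a₀ ha₀)
      · obtain ⟨a₀, ha₀, rfl⟩ := List.mem_map.1 ha
        rw [RelAtom.realize_map]
        exact (RelAtom.realize_emb f₁ a₀ (canId Φ ψ₁)).2
          (canM_realize_self Φ ψ₁ a₀ (List.mem_append_right _ ha₀))
    · obtain ⟨a₀, ha₀, rfl⟩ := List.mem_map.1 ha
      rw [RelAtom.realize_map]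
      rw [RelAtom.realize_ext a₀ (v := u ∘ Sum.map Sum.inl id) (w := ⇑f₂ ∘ canId Φ ψ₂)
          (fun x => by rcases x with j | ⟨⟩
                       · exact hf12 j
                       · rfl)]
      exact (RelAtom.realize_emb f₂ a₀ (canId Φ ψ₂)).2
        (canM_realize_self Φ ψ₂ a₀ (List.mem_append_right _ ha₀))
  have hres := hχ C hC.2 u hreal
  cases χ with
  | none => exact absurd hres not_false
  | some χ₀ =>
    have h0 : (χ₀.map Sum.inl).Realize u := hres
    rw [RelAtom.realize_map] at h0
    have h1 : χ₀.Realize (⇑f₁ ∘ canId Φ ψ₁) := h0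
    exact (canM_realize_iff Φ ψ₁ χ₀ (canId Φ ψ₁)).1
      ((RelAtom.realize_emb f₁ χ₀ (canId Φ ψ₁)).1 h1)

end Forward
section Diagrams

variable {Φ : List (HornClause L ℕ)}

lemma relAtom_finite {V : Type} [Finite V] [Finite L.Symbols] : Finite (RelAtom L V) := by
  have h1 : Finite (Σ l, L.Relations l) :=
    Finite.of_injective (Sum.inr : (Σ l, L.Relations l) → L.Symbols) Sum.inr_injective
  apply Finite.of_injective
    (fun a : RelAtom L V => (⟨⟨a.n, a.R⟩, a.args⟩ : Σ (p : Σ l, L.Relations l), (Fin p.1 → V)))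
  rintro ⟨n, R, args⟩ ⟨n', R', args'⟩ h
  obtain ⟨h1, h2⟩ := Sigma.mk.inj_iff.1 h
  obtain ⟨h3, h4⟩ := Sigma.mk.inj_iff.1 h1
  subst h3
  cases h4
  cases h2
  rfl

/-- The positive diagram of a finite structure along an enumeration of its elements. -/
noncomputable def diagram {M V : Type} [L.Structure M] [Finite V] [Finite L.Symbols]
    (v : V → M) : List (RelAtom L V) :=
  haveI : Finite (RelAtom L V) := relAtom_finite
  haveI := Fintype.ofFinite (RelAtom L V)
  haveI := Classical.decPred (fun a : RelAtom L V => a.Realize v)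
  (Finset.univ.filter (fun a => a.Realize v)).toList

lemma mem_diagram {M V : Type} [L.Structure M] [Finite V] [Finite L.Symbols]
    {v : V → M} {a : RelAtom L V} : a ∈ diagram v ↔ a.Realize v := by
  classical
  simp [diagram]

/-- Extending an enumeration of `A` to an enumeration of a one-point extension. -/
lemma exists_extend_equiv {A B : Type} [Finite A] [Finite B] (f : A ↪ B)
    (hcard : Nat.card B = Nat.card A + 1) (m : ℕ) (eA : A ≃ Fin m) :
    ∃ g : B ≃ Fin m ⊕ Unit, ∀ a, g (f a) = Sum.inl (eA a) := by
  classical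
  have hrange : (Set.range f).ncard = Nat.card A := by
    rw [← Set.image_univ, Set.ncard_image_of_injective _ f.injective, Set.ncard_univ]
  have hcompl : (Set.range f)ᶜ.ncard = 1 := by
    have := Set.ncard_add_ncard_compl (Set.range f) (Set.toFinite _) (Set.toFinite _)
    omega
  obtain ⟨b₀, hb₀⟩ := Set.ncard_eq_one.1 hcompl
  let g : B → Fin m ⊕ Unit := fun b =>
    if h : ∃ a, f a = b then Sum.inl (eA (Classical.choose h)) else Sum.inr ()
  have hg : ∀ a, g (f a) = Sum.inl (eA a) := by
    intro a
    have h : ∃ a', f a' = f a := ⟨a, rfl⟩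
    have := Classical.choose_spec h
    simp only [g, dif_pos h]
    rw [f.injective this]
  have hb₀' : ¬ ∃ a, f a = b₀ := by
    intro ⟨a, ha⟩
    have : b₀ ∈ (Set.range f)ᶜ := hb₀ ▸ rfl
    exact this ⟨a, ha⟩
  have hgb₀ : g b₀ = Sum.inr () := by simp only [g, dif_neg hb₀']
  have hbij : Function.Bijective g := by
    constructor
    · intro b b' hbb
      by_cases h : ∃ a, f a = b <;> by_cases h' : ∃ a', f a' = b'
      · obtain ⟨a, rfl⟩ := h; obtain ⟨a', rfl⟩ := h'
        rw [hg, hg] at hbb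
        rw [eA.injective (Sum.inl_injective hbb)]
      · rw [show b' = b₀ from by
            have : b' ∈ (Set.range f)ᶜ := fun hx => h' (by obtain ⟨a, ha⟩ := hx; exact ⟨a, ha⟩)
            rw [hb₀] at this; exact this] at hbb ⊢
        obtain ⟨a, rfl⟩ := h
        rw [hg, hgb₀] at hbb
        exact absurd hbb (by simp)
      · rw [show b = b₀ from by
            have : b ∈ (Set.range f)ᶜ := fun hx => h (by obtain ⟨a, ha⟩ := hx; exact ⟨a, ha⟩)
            rw [hb₀] at this; exact this] at hbb ⊢
        obtain ⟨a', rfl⟩ := h'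
        rw [hg, hgb₀] at hbb
        exact absurd hbb (by simp)
      · have hb : b ∈ (Set.range f)ᶜ := fun hx => h (by obtain ⟨a, ha⟩ := hx; exact ⟨a, ha⟩)
        have hb' : b' ∈ (Set.range f)ᶜ := fun hx => h' (by obtain ⟨a, ha⟩ := hx; exact ⟨a, ha⟩)
        rw [hb₀] at hb hb'
        rw [hb, hb']
    · intro x
      rcases x with j | ⟨⟩
      · exact ⟨f (eA.symm j), by rw [hg, Equiv.apply_symm_apply]⟩
      · exact ⟨b₀, hgb₀⟩
  exact ⟨⟨g, Function.surjInv hbij.2, Function.leftInverse_surjInv hbij,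
    Function.rightInverse_surjInv hbij.2⟩, hg⟩

end Diagrams
section OnePoint

variable [L.IsRelational] [Finite L.Symbols] {Φ : List (HornClause L ℕ)}

lemma onepoint_dir (hsc : SubsumptionCondition Φ) : HasOnePointAP (Models Φ) := by
  intro A B₁ B₂ e₁ e₂ hA hB₁ hB₂ hc₁ hc₂
  haveI : Finite A := hA.1
  haveI : Finite B₁ := hB₁.1
  haveI : Finite B₂ := hB₂.1
  let m := Nat.card A
  let eA : A ≃ Fin m := Finite.equivFin A
  obtain ⟨g₁, hg₁⟩ := exists_extend_equiv e₁.toEmbedding hc₁ m eA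
  obtain ⟨g₂, hg₂⟩ := exists_extend_equiv e₂.toEmbedding hc₂ m eA
  let φ : List (RelAtom L (Fin m)) := diagram (⇑eA.symm)
  let φ₁ : List (RelAtom L (Fin m ⊕ Unit)) := diagram (⇑g₁.symm)
  let φ₂ : List (RelAtom L (Fin m ⊕ Unit)) := diagram (⇑g₂.symm)
  let ψ₁ := φ.map (RelAtom.map Sum.inl) ++ φ₁
  let ψ₂ := φ.map (RelAtom.map Sum.inl) ++ φ₂
  have hsymm₁ : ∀ j : Fin m, g₁.symm (Sum.inl j) = e₁ (eA.symm j) := by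
    intro j
    apply g₁.injective
    rw [Equiv.apply_symm_apply]
    exact ((hg₁ (eA.symm j)).trans (by rw [Equiv.apply_symm_apply])).symm
  have hsymm₂ : ∀ j : Fin m, g₂.symm (Sum.inl j) = e₂ (eA.symm j) := by
    intro j
    apply g₂.injective
    rw [Equiv.apply_symm_apply]
    exact ((hg₂ (eA.symm j)).trans (by rw [Equiv.apply_symm_apply])).symm
  have hreal₁ : ∀ a ∈ ψ₁, a.Realize (⇑g₁.symm) := by
    intro a ha
    rcases List.mem_append.1 ha with ha | ha
    · obtain ⟨a₀, ha₀, rfl⟩ := List.mem_map.1 ha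
      rw [RelAtom.realize_map, RelAtom.realize_ext a₀ (v := ⇑g₁.symm ∘ Sum.inl)
        (w := ⇑e₁ ∘ ⇑eA.symm) hsymm₁]
      exact (RelAtom.realize_emb e₁ a₀ (⇑eA.symm)).2 (mem_diagram.1 ha₀)
    · exact mem_diagram.1 ha
  have hreal₂ : ∀ a ∈ ψ₂, a.Realize (⇑g₂.symm) := by
    intro a ha
    rcases List.mem_append.1 ha with ha | ha
    · obtain ⟨a₀, ha₀, rfl⟩ := List.mem_map.1 ha
      rw [RelAtom.realize_map, RelAtom.realize_ext a₀ (v := ⇑g₂.symm ∘ Sum.inl)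
        (w := ⇑e₂ ∘ ⇑eA.symm) hsymm₂]
      exact (RelAtom.realize_emb e₂ a₀ (⇑eA.symm)).2 (mem_diagram.1 ha₀)
    · exact mem_diagram.1 ha
  have hent₁ : ∀ a : RelAtom L (Fin m ⊕ Unit), Entails Φ ψ₁ (some a) → a.Realize (⇑g₁.symm) :=
    fun a h => h B₁ hB₁.2 (⇑g₁.symm) hreal₁
  have hent₂ : ∀ a : RelAtom L (Fin m ⊕ Unit), Entails Φ ψ₂ (some a) → a.Realize (⇑g₂.symm) :=
    fun a h => h B₂ hB₂.2 (⇑g₂.symm) hreal₂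
  have hbot₁ : ¬ Entails Φ ψ₁ none := fun h => h B₁ hB₁.2 (⇑g₁.symm) hreal₁
  have hsub₁ : Subsumes Φ ψ₁ φ := by
    intro χ h
    cases χ with
    | none => exact absurd (h B₁ hB₁.2 (⇑g₁.symm) hreal₁) not_false
    | some χ₀ =>
      have h1 : (χ₀.map Sum.inl).Realize (⇑g₁.symm) := hent₁ _ h
      rw [RelAtom.realize_map, RelAtom.realize_ext χ₀ (v := ⇑g₁.symm ∘ Sum.inl)
        (w := ⇑e₁ ∘ ⇑eA.symm) hsymm₁, RelAtom.realize_emb] at h1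
      exact entails_of_mem (mem_diagram.2 h1)
  have hsub₂ : Subsumes Φ ψ₂ φ := by
    intro χ h
    cases χ with
    | none => exact absurd (h B₂ hB₂.2 (⇑g₂.symm) hreal₂) not_false
    | some χ₀ =>
      have h1 : (χ₀.map Sum.inl).Realize (⇑g₂.symm) := hent₂ _ h
      rw [RelAtom.realize_map, RelAtom.realize_ext χ₀ (v := ⇑g₂.symm ∘ Sum.inl)
        (w := ⇑e₂ ∘ ⇑eA.symm) hsymm₂, RelAtom.realize_emb] at h1
      exact entails_of_mem (mem_diagram.2 h1)
  have hb := hsc m φ φ₁ φ₂ hsub₁ hsub₂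
  have hb' := hsc m φ φ₂ φ₁ hsub₂ hsub₁
  set big := φ.map (RelAtom.map (Sum.inl ∘ Sum.inl)) ++ φ₁.map (RelAtom.map Sum.inl)
      ++ φ₂.map (RelAtom.map (Sum.map Sum.inl id)) with hbigdef
  set big' := φ.map (RelAtom.map (Sum.inl ∘ Sum.inl)) ++ φ₂.map (RelAtom.map Sum.inl)
      ++ φ₁.map (RelAtom.map (Sum.map Sum.inl id)) with hbig'def
  have hbotbig : ¬ Entails Φ big none := fun h => hbot₁ (hb none h)
  let ρ : (Fin m ⊕ Unit) ⊕ Unit → (Fin m ⊕ Unit) ⊕ Unit :=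
    Sum.elim (Sum.elim (Sum.inl ∘ Sum.inl) (fun _ => Sum.inr ())) (fun _ => Sum.inl (Sum.inr ()))
  have hρinl : ρ ∘ Sum.inl = Sum.map Sum.inl id := by
    funext x; rcases x with j | ⟨⟩ <;> rfl
  have hρσ : ρ ∘ Sum.map Sum.inl id = Sum.inl := by
    funext x; rcases x with j | ⟨⟩ <;> rfl
  have hρ : ∀ a ∈ big, a.map ρ ∈ big' := by
    intro a ha
    rcases List.mem_append.1 ha with ha | ha
    · rcases List.mem_append.1 ha with ha | ha
      · obtain ⟨a₀, ha₀, rfl⟩ := List.mem_map.1 ha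
        refine List.mem_append_left _ (List.mem_append_left _ (List.mem_map.2 ⟨a₀, ha₀, ?_⟩))
        rfl
      · obtain ⟨a₀, ha₀, rfl⟩ := List.mem_map.1 ha
        refine List.mem_append_right _ (List.mem_map.2 ⟨a₀, ha₀, ?_⟩)
        rw [RelAtom.map_map, hρinl]
    · obtain ⟨a₀, ha₀, rfl⟩ := List.mem_map.1 ha
      refine List.mem_append_left _ (List.mem_append_right _ (List.mem_map.2 ⟨a₀, ha₀, ?_⟩))
      rw [RelAtom.map_map, hρσ]
  -- the amalgam
  let h₁ : B₁ ↪[L] canM Φ big :=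
    { toFun := fun b => (Sum.inl (g₁ b) : CanCarrier Φ big)
      inj' := fun x y h => g₁.injective (Sum.inl_injective h)
      map_fun' := fun {n} F => isEmptyElim F
      map_rel' := by
        intro n r x
        show Entails Φ big (some ⟨n, r, (fun b => Sum.inl (g₁ b)) ∘ x⟩) ↔ Structure.RelMap r x
        have hxx : ⇑g₁.symm ∘ (⇑g₁ ∘ x) = x := by funext i; simp
        constructor
        · intro h
          have h2 : Entails Φ ψ₁ (some ⟨n, r, ⇑g₁ ∘ x⟩) :=
            hb (some ⟨n, r, ⇑g₁ ∘ x⟩) h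
          have h3 : Structure.RelMap r (⇑g₁.symm ∘ (⇑g₁ ∘ x)) := hent₁ _ h2
          rwa [hxx] at h3
        · intro h
          refine entails_of_mem ?_
          refine List.mem_append_left _ (List.mem_append_right _
            (List.mem_map.2 ⟨⟨n, r, ⇑g₁ ∘ x⟩, mem_diagram.2 ?_, rfl⟩))
          show Structure.RelMap r (⇑g₁.symm ∘ (⇑g₁ ∘ x))
          rwa [hxx] }
  let h₂ : B₂ ↪[L] canM Φ big :=
    { toFun := fun b => (Sum.map Sum.inl id (g₂ b) : CanCarrier Φ big)
      inj' := fun x y h => g₂.injective ((Sum.inl_injective.sumMap Function.injective_id) h)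
      map_fun' := fun {n} F => isEmptyElim F
      map_rel' := by
        intro n r x
        show Entails Φ big (some ⟨n, r, (fun b => Sum.map Sum.inl id (g₂ b)) ∘ x⟩) ↔
          Structure.RelMap r x
        have hxx : ⇑g₂.symm ∘ (⇑g₂ ∘ x) = x := by funext i; simp
        constructor
        · intro h
          have h4 : Entails Φ big' (some (RelAtom.map ρ ⟨n, r, (Sum.map Sum.inl id) ∘ (⇑g₂ ∘ x)⟩)) :=
            entails_extend (χ := some ⟨n, r, (Sum.map Sum.inl id) ∘ (⇑g₂ ∘ x)⟩) ρ hρ h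
          have h5 : Entails Φ big' (some (RelAtom.map Sum.inl ⟨n, r, ⇑g₂ ∘ x⟩)) := by
            have : RelAtom.map ρ ⟨n, r, (Sum.map Sum.inl id) ∘ (⇑g₂ ∘ x)⟩
                = RelAtom.map Sum.inl ⟨n, r, ⇑g₂ ∘ x⟩ := by
              show (RelAtom.map ρ (RelAtom.map (Sum.map Sum.inl id) ⟨n, r, ⇑g₂ ∘ x⟩)) = _
              rw [RelAtom.map_map, hρσ]
            rwa [this] at h4
          have h6 : Entails Φ ψ₂ (some ⟨n, r, ⇑g₂ ∘ x⟩) := hb' (some ⟨n, r, ⇑g₂ ∘ x⟩) h5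
          have h7 : Structure.RelMap r (⇑g₂.symm ∘ (⇑g₂ ∘ x)) := hent₂ _ h6
          rwa [hxx] at h7
        · intro h
          refine entails_of_mem ?_
          refine List.mem_append_right _
            (List.mem_map.2 ⟨⟨n, r, ⇑g₂ ∘ x⟩, mem_diagram.2 ?_, rfl⟩)
          show Structure.RelMap r (⇑g₂.symm ∘ (⇑g₂ ∘ x))
          rwa [hxx] }
  refine ⟨canM Φ big, h₁, h₂, canM_mem_models Φ big hbotbig, ?_⟩
  apply Embedding.ext
  intro a
  show (Sum.inl (g₁ (e₁ a)) : (Fin m ⊕ Unit) ⊕ Unit) = Sum.map Sum.inl id (g₂ (e₂ a))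
  rw [show g₁ (e₁ a) = Sum.inl (eA a) from hg₁ a, show g₂ (e₂ a) = Sum.inl (eA a) from hg₂ a]
  rfl

end OnePoint
section Reduction

variable [L.IsRelational] {Φ : List (HornClause L ℕ)}

/-- In a relational language, every subset of a structure is a substructure. -/
def setSubstructure (L : FirstOrder.Language.{0,0}) [L.IsRelational] (M : Type)
    [L.Structure M] (s : Set M) : L.Substructure M :=
  ⟨s, fun {n} f => isEmptyElim f⟩

lemma mem_setSubstructure {M : Type} [L.Structure M] {s : Set M} {x : M} :
    x ∈ setSubstructure L M s ↔ x ∈ s := Iff.rfl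

lemma card_substructure {M : Type} [L.Structure M] (S : L.Substructure M) :
    Nat.card S = (S : Set M).ncard := by
  rw [← Nat.card_coe_set_eq]
  exact Nat.card_congr (Equiv.subtypeEquivRight (fun x => Iff.rfl))

lemma substructure_mem_models {B : Bundled.{0} L.Structure} (hB : B ∈ Models Φ)
    (S : L.Substructure B) : (⟨S, inferInstance⟩ : Bundled L.Structure) ∈ Models Φ := by
  haveI : Finite B := hB.1
  refine ⟨Subtype.finite, ?_⟩
  intro c hc v hp
  have h2 := hB.2 c hc (⇑S.subtype ∘ v)
  have h3 := h2 (fun a ha => (RelAtom.realize_emb S.subtype a v).2 (hp a ha))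
  cases hcc : c.concl with
  | none => rw [hcc] at h3; exact h3
  | some a =>
    rw [hcc] at h3
    exact (RelAtom.realize_emb S.subtype a v).1 h3

/-- Inverse of a surjective embedding. -/
noncomputable def invEmb {A B : Type} [L.Structure A] [L.Structure B] (e : A ↪[L] B)
    (hs : Function.Surjective ⇑e) : B ↪[L] A where
  toFun := Function.surjInv hs
  inj' := Function.injective_surjInv hs
  map_fun' := fun {n} f => isEmptyElim f
  map_rel' := by
    intro n r x
    have h := StrongHomClass.map_rel e r (Function.surjInv hs ∘ x)
    rw [show ⇑e ∘ (Function.surjInv hs ∘ x) = x from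
      funext fun i => Function.surjInv_eq hs (x i)] at h
    exact h.symm

lemma invEmb_comp {A B : Type} [L.Structure A] [L.Structure B] (e : A ↪[L] B)
    (hs : Function.Surjective ⇑e) (a : A) : invEmb e hs (e a) = a :=
  e.injective (Function.surjInv_eq hs (e a))

lemma surj_of_card_le {A B : Bundled.{0} L.Structure} (hA : Finite A) (hB : Finite B)
    (e : A ↪[L] B) (h : Nat.card B ≤ Nat.card A) : Function.Surjective ⇑e :=
  (e.injective.bijective_of_nat_card_le h).2

/-- Amalgamation when the second embedding is surjective. -/
lemma amalg_of_surj₂ {A B₁ B₂ : Bundled.{0} L.Structure} (e₁ : A ↪[L] B₁) (e₂ : A ↪[L] B₂)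
    (hB₁ : B₁ ∈ Models Φ) (hs : Function.Surjective ⇑e₂) :
    ∃ (C : Bundled.{0} L.Structure) (f₁ : B₁ ↪[L] C) (f₂ : B₂ ↪[L] C),
      C ∈ Models Φ ∧ f₁.comp e₁ = f₂.comp e₂ := by
  refine ⟨B₁, Embedding.refl L B₁, e₁.comp (invEmb e₂ hs), hB₁, ?_⟩
  apply Embedding.ext
  intro a
  show e₁ a = e₁ (invEmb e₂ hs (e₂ a))
  rw [invEmb_comp]

/-- Amalgamation when the first embedding is surjective. -/
lemma amalg_of_surj₁ {A B₁ B₂ : Bundled.{0} L.Structure} (e₁ : A ↪[L] B₁) (e₂ : A ↪[L] B₂)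
    (hB₂ : B₂ ∈ Models Φ) (hs : Function.Surjective ⇑e₁) :
    ∃ (C : Bundled.{0} L.Structure) (f₁ : B₁ ↪[L] C) (f₂ : B₂ ↪[L] C),
      C ∈ Models Φ ∧ f₁.comp e₁ = f₂.comp e₂ := by
  refine ⟨B₂, e₂.comp (invEmb e₁ hs), Embedding.refl L B₂, hB₂, ?_⟩
  apply Embedding.ext
  intro a
  show e₂ (invEmb e₁ hs (e₁ a)) = e₂ a
  rw [invEmb_comp]

lemma exists_not_mem_range {A B : Bundled.{0} L.Structure} (hA : Finite A) (hB : Finite B)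
    (e : A ↪[L] B) (h : ¬ Nat.card B ≤ Nat.card A) : ∃ b : B, b ∉ Set.range ⇑e := by
  by_contra hc
  push_neg at hc
  exact h (Nat.card_le_card_of_surjective ⇑e (fun b => hc b))

lemma card_range_union_singleton {A B : Bundled.{0} L.Structure} (hA : Finite A)
    (hB : Finite B) (e : A ↪[L] B) {b : B} (hb : b ∉ Set.range ⇑e) :
    (Set.range ⇑e ∪ {b}).ncard = Nat.card A + 1 := by
  rw [Set.union_singleton, Set.ncard_insert_of_notMem hb (Set.toFinite _)]
  congr 1
  rw [← Set.image_univ, Set.ncard_image_of_injective _ e.injective, Set.ncard_univ]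

end Reduction
section Induction

variable [L.IsRelational] {Φ : List (HornClause L ℕ)}

lemma inner_amalg (hop : HasOnePointAP (Models Φ)) (k : ℕ) :
    ∀ (A B₁ B₂ : Bundled.{0} L.Structure) (e₁ : A ↪[L] B₁) (e₂ : A ↪[L] B₂),
    A ∈ Models Φ → B₁ ∈ Models Φ → B₂ ∈ Models Φ →
    Nat.card B₁ ≤ Nat.card A + k → Nat.card B₂ ≤ Nat.card A + 1 →
    ∃ (C : Bundled.{0} L.Structure) (f₁ : B₁ ↪[L] C) (f₂ : B₂ ↪[L] C),
      C ∈ Models Φ ∧ f₁.comp e₁ = f₂.comp e₂ := by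
  induction k with
  | zero =>
    intro A B₁ B₂ e₁ e₂ hA hB₁ hB₂ hk _
    exact amalg_of_surj₁ e₁ e₂ hB₂ (surj_of_card_le hA.1 hB₁.1 e₁ (by omega))
  | succ k ih =>
    intro A B₁ B₂ e₁ e₂ hA hB₁ hB₂ hk h1
    by_cases hc : Nat.card B₁ ≤ Nat.card A
    · exact amalg_of_surj₁ e₁ e₂ hB₂ (surj_of_card_le hA.1 hB₁.1 e₁ hc)
    by_cases hc2 : Nat.card B₂ ≤ Nat.card A
    · exact amalg_of_surj₂ e₁ e₂ hB₁ (surj_of_card_le hA.1 hB₂.1 e₂ hc2)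
    haveI : Finite A := hA.1
    haveI : Finite B₁ := hB₁.1
    haveI : Finite B₂ := hB₂.1
    obtain ⟨b, hb⟩ := exists_not_mem_range hA.1 hB₁.1 e₁ hc
    let S₁ := setSubstructure L B₁ (Set.range ⇑e₁ ∪ {b})
    let A₁ : Bundled L.Structure := ⟨S₁, inferInstance⟩
    have hA₁ : A₁ ∈ Models Φ := substructure_mem_models hB₁ S₁
    let e₁' : A ↪[L] A₁ := FirstOrder.Language.Embedding.codRestrict S₁ e₁ (fun a => Or.inl ⟨a, rfl⟩)
    let i₁ : A₁ ↪[L] B₁ := S₁.subtype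
    have hcA₁ : Nat.card A₁ = Nat.card A + 1 := by
      rw [show (Nat.card A₁) = Nat.card S₁ from rfl, card_substructure]
      exact card_range_union_singleton hA.1 hB₁.1 e₁ hb
    have hcB₂ : Nat.card B₂ = Nat.card A + 1 := le_antisymm h1 (by omega)
    obtain ⟨D, g₁, g₂, hD, hcommD⟩ := hop A A₁ B₂ e₁' e₂ hA hA₁ hB₂ hcA₁ hcB₂
    haveI : Finite D := hD.1
    let SD := setSubstructure L D (Set.range ⇑g₁ ∪ Set.range ⇑g₂)
    let D' : Bundled L.Structure := ⟨SD, inferInstance⟩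
    have hD' : D' ∈ Models Φ := substructure_mem_models hD SD
    let g₁' : A₁ ↪[L] D' := FirstOrder.Language.Embedding.codRestrict SD g₁ (fun a => Or.inl ⟨a, rfl⟩)
    let g₂' : B₂ ↪[L] D' := FirstOrder.Language.Embedding.codRestrict SD g₂ (fun a => Or.inr ⟨a, rfl⟩)
    have hcD' : Nat.card D' ≤ Nat.card A₁ + 1 := by
      rw [show (Nat.card D') = Nat.card SD from rfl, card_substructure, hcA₁,
        show ((SD : Set D)) = Set.range ⇑g₁ ∪ Set.range ⇑g₂ from rfl]
      have h5 := Set.ncard_union_add_ncard_inter (Set.range ⇑g₁) (Set.range ⇑g₂)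
        (Set.toFinite _) (Set.toFinite _)
      have h6 : (Set.range (⇑g₁ ∘ ⇑e₁')).ncard = Nat.card A := by
        rw [← Set.image_univ, Set.ncard_image_of_injective _ (g₁.injective.comp e₁'.injective),
          Set.ncard_univ]
      have h7 : Set.range (⇑g₁ ∘ ⇑e₁') ⊆ Set.range ⇑g₁ ∩ Set.range ⇑g₂ := by
        rintro _ ⟨a, rfl⟩
        exact ⟨⟨e₁' a, rfl⟩, ⟨e₂ a, (DFunLike.congr_fun hcommD a).symm⟩⟩
      have h8 : Nat.card A ≤ (Set.range ⇑g₁ ∩ Set.range ⇑g₂).ncard := by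
        rw [← h6]; exact Set.ncard_le_ncard h7 (Set.toFinite _)
      have h9 : (Set.range ⇑g₁).ncard = Nat.card A + 1 := by
        rw [← Set.image_univ, Set.ncard_image_of_injective _ g₁.injective, Set.ncard_univ, hcA₁]
      have h10 : (Set.range ⇑g₂).ncard = Nat.card A + 1 := by
        rw [← Set.image_univ, Set.ncard_image_of_injective _ g₂.injective, Set.ncard_univ, hcB₂]
      omega
    obtain ⟨E, p₁, p₂, hE, hcommE⟩ := ih A₁ B₁ D' i₁ g₁' hA₁ hB₁ hD' (by omega) hcD'
    refine ⟨E, p₁, p₂.comp g₂', hE, ?_⟩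
    apply Embedding.ext
    intro a
    show p₁ (e₁ a) = p₂ (g₂' (e₂ a))
    have hstep : g₁' (e₁' a) = g₂' (e₂ a) := Subtype.ext (DFunLike.congr_fun hcommD a)
    calc p₁ (e₁ a) = (p₁.comp i₁) (e₁' a) := rfl
      _ = (p₂.comp g₁') (e₁' a) := DFunLike.congr_fun hcommE (e₁' a)
      _ = p₂ (g₁' (e₁' a)) := rfl
      _ = p₂ (g₂' (e₂ a)) := by rw [hstep]

lemma outer_amalg (hop : HasOnePointAP (Models Φ)) (n : ℕ) :
    ∀ (A B₁ B₂ : Bundled.{0} L.Structure) (e₁ : A ↪[L] B₁) (e₂ : A ↪[L] B₂),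
    A ∈ Models Φ → B₁ ∈ Models Φ → B₂ ∈ Models Φ →
    Nat.card B₂ ≤ Nat.card A + n →
    ∃ (C : Bundled.{0} L.Structure) (f₁ : B₁ ↪[L] C) (f₂ : B₂ ↪[L] C),
      C ∈ Models Φ ∧ f₁.comp e₁ = f₂.comp e₂ := by
  induction n with
  | zero =>
    intro A B₁ B₂ e₁ e₂ hA hB₁ hB₂ hn
    exact amalg_of_surj₂ e₁ e₂ hB₁ (surj_of_card_le hA.1 hB₂.1 e₂ (by omega))
  | succ n ih =>
    intro A B₁ B₂ e₁ e₂ hA hB₁ hB₂ hn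
    by_cases hc : Nat.card B₂ ≤ Nat.card A
    · exact amalg_of_surj₂ e₁ e₂ hB₁ (surj_of_card_le hA.1 hB₂.1 e₂ hc)
    haveI : Finite A := hA.1
    haveI : Finite B₂ := hB₂.1
    obtain ⟨b, hb⟩ := exists_not_mem_range hA.1 hB₂.1 e₂ hc
    let S₂ := setSubstructure L B₂ (Set.range ⇑e₂ ∪ {b})
    let A₂ : Bundled L.Structure := ⟨S₂, inferInstance⟩
    have hA₂ : A₂ ∈ Models Φ := substructure_mem_models hB₂ S₂
    let e₂' : A ↪[L] A₂ := FirstOrder.Language.Embedding.codRestrict S₂ e₂ (fun a => Or.inl ⟨a, rfl⟩)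
    let i₂ : A₂ ↪[L] B₂ := S₂.subtype
    have hcA₂ : Nat.card A₂ = Nat.card A + 1 := by
      rw [show (Nat.card A₂) = Nat.card S₂ from rfl, card_substructure]
      exact card_range_union_singleton hA.1 hB₂.1 e₂ hb
    obtain ⟨E, q₁, q₂, hE, hq⟩ := inner_amalg hop (Nat.card B₁) A B₁ A₂ e₁ e₂' hA hB₁ hA₂
      (by omega) (by omega)
    obtain ⟨F, r₁, r₂, hF, hr⟩ := ih A₂ E B₂ q₂ i₂ hA₂ hE hB₂ (by omega)
    refine ⟨F, r₁.comp q₁, r₂, hF, ?_⟩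
    apply Embedding.ext
    intro a
    show r₁ (q₁ (e₁ a)) = r₂ (e₂ a)
    calc r₁ (q₁ (e₁ a)) = r₁ ((q₁.comp e₁) a) := rfl
      _ = r₁ ((q₂.comp e₂') a) := by rw [hq]
      _ = (r₁.comp q₂) (e₂' a) := rfl
      _ = (r₂.comp i₂) (e₂' a) := DFunLike.congr_fun hr (e₂' a)
      _ = r₂ (e₂ a) := rfl

end Induction
theorem ap_iff_subsumption [L.IsRelational] [Finite L.Symbols]
    (Φ : List (HornClause L ℕ)) :
    HasAP (Models Φ) ↔ SubsumptionCondition Φ := by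
  constructor
  · exact forward_dir
  · intro hsc A B₁ B₂ e₁ e₂ hA hB₁ hB₂
    exact outer_amalg (onepoint_dir hsc) (Nat.card B₂) A B₁ B₂ e₁ e₂ hA hB₁ hB₂ (by omega)

end AmalgamationHard
end
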